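/- arXiv:1911.08812 — 3 statements merged into one kernel-verified Lean document; each statement's English description precedes it below -/
import Mathlib

section
/- Let (S, E) be a Weyl *-semigroup. Then: (i) U is an ultrafilter if and only if U* is an ultrafilter; (ii) if U is a filter and V is an ultrafilter with (U*U)^≲ = (VV*)^≲, then (UV)^≲ is an ultrafilter. (Thus the ultrafilters form an ideal in the filter groupoid.) -/
open scoped Pointwise

variable {S : Type*} [Semigroup S] [StarMul S]

/-- `(S, E)` is a Weyl *-semigroup: `E` is a *-subsemigroup, `E` is *-normal,
and the *-squares lie in `E` and commute with every element of `E`. -/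
def WeylPair (E : Set S) : Prop :=
  (∀ a ∈ E, ∀ b ∈ E, a * b ∈ E) ∧ star '' E = E ∧
  (∀ (a : S), ∀ e ∈ E, star a * e * a ∈ E) ∧
  (∀ a : S, star a * a ∈ E) ∧
  (∀ (a : S), ∀ e ∈ E, star a * a * e = e * (star a * a))

/-- *-domination: `a ≲ b` iff `ab* ∈ E` and `a = ab*b`. -/
def Sdom (E : Set S) (a b : S) : Prop := a * star b ∈ E ∧ a = a * star b * b

/-- `T^≲ = {x ∈ S : ∃ t ∈ T, t ≲ x}`. -/
def upcl (E : Set S) (T : Set S) : Set S := {x | ∃ t ∈ T, Sdom E t x}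

/-- A filter is a nonempty `U` such that `a, b ∈ U` iff some `c ∈ U` has `c ≲ a, b`. -/
def IsFilt (E : Set S) (U : Set S) : Prop :=
  U.Nonempty ∧ ∀ a b : S, (a ∈ U ∧ b ∈ U) ↔ ∃ c ∈ U, Sdom E c a ∧ Sdom E c b

/-- An ultrafilter is a maximal proper filter. -/
def IsUltra (E : Set S) (U : Set S) : Prop :=
  IsFilt E U ∧ U ≠ Set.univ ∧
    ∀ V : Set S, IsFilt E V → U ⊆ V → V = U ∨ V = Set.univ

section Lemmas

variable {E : Set S}

lemma wp_starE (hE : WeylPair E) {e : S} (he : e ∈ E) : star e ∈ E := by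
  rw [← hE.2.1]; exact ⟨e, he, rfl⟩

lemma wp_sq (hE : WeylPair E) (a : S) : star a * a ∈ E := hE.2.2.2.1 a

lemma wp_sq' (hE : WeylPair E) (a : S) : a * star a ∈ E := by
  simpa using hE.2.2.2.1 (star a)

lemma wp_conj (hE : WeylPair E) {e : S} (he : e ∈ E) (a : S) : star a * e * a ∈ E :=
  hE.2.2.1 a e he

lemma wp_conj' (hE : WeylPair E) {e : S} (he : e ∈ E) (a : S) : a * e * star a ∈ E := by
  simpa using hE.2.2.1 (star a) e he

lemma wp_comm (hE : WeylPair E) {e : S} (he : e ∈ E) (a : S) :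
    star a * a * e = e * (star a * a) := hE.2.2.2.2 a e he

lemma wp_comm' (hE : WeylPair E) {e : S} (he : e ∈ E) (a : S) :
    a * star a * e = e * (a * star a) := by
  simpa using hE.2.2.2.2 (star a) e he

lemma dom_trans (hE : WeylPair E) {a b c : S} (hab : Sdom E a b) (hbc : Sdom E b c) :
    Sdom E a c := by
  obtain ⟨h1, h2⟩ := hab
  obtain ⟨g1, g2⟩ := hbc
  constructor
  · have key : a * star c = (a * star b) * (b * star c) := by
      nth_rewrite 1 [h2]
      rw [mul_assoc (a * star b) b (star c)]
    rw [key]; exact hE.1 _ h1 _ g1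
  · have key : a * star c * c = a := by
      nth_rewrite 1 [h2]
      rw [mul_assoc (a * star b) b (star c), mul_assoc (a * star b) (b * star c) c,
        ← g2, ← h2]
    exact key.symm

lemma dom_absorb (hE : WeylPair E) {a b : S} (h : Sdom E a b) : b * star b * a = a := by
  obtain ⟨h1, h2⟩ := h
  have hc := wp_comm' hE h1 b
  calc b * star b * a
      = b * star b * (a * star b * b) := by rw [← h2]
    _ = (b * star b * (a * star b)) * b := by
        rw [← mul_assoc (b * star b) (a * star b) b]
    _ = ((a * star b) * (b * star b)) * b := by rw [hc]
    _ = a * star b * b * star b * b := by rw [← mul_assoc (a * star b) b (star b)]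
    _ = a := by rw [← h2, ← h2]

lemma dom_star (hE : WeylPair E) {a b : S} (h : Sdom E a b) :
    Sdom E (star a) (star b) := by
  obtain ⟨h1, h2⟩ := h
  constructor
  · rw [star_star]
    have key : star a * b = star b * (b * star a) * b := by
      nth_rewrite 1 [h2]
      simp only [star_mul, star_star, mul_assoc]
    rw [key]
    exact wp_conj hE (by simpa using wp_starE hE h1) b
  · rw [star_star]
    have habs := dom_absorb hE ⟨h1, h2⟩
    have h3 := congrArg star habs
    simp only [star_mul, star_star] at h3
    rw [← mul_assoc] at h3
    exact h3.symm
lemma dom_mulE (hE : WeylPair E) {e a b : S} (he : e ∈ E) (h : Sdom E a b) :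
    Sdom E (e * a) b := by
  obtain ⟨h1, h2⟩ := h
  constructor
  · rw [mul_assoc]; exact hE.1 _ he _ h1
  · have key : e * a * star b * b = e * a := by
      rw [mul_assoc e a (star b), mul_assoc e (a * star b) b, ← h2]
    exact key.symm

lemma dom_sq (hE : WeylPair E) {a t : S} (h : Sdom E a t) (b : S) :
    Sdom E (a * (star b * b)) t := by
  obtain ⟨h1, h2⟩ := h
  constructor
  · have key : (a * (star b * b)) * star t = (a * star t) * (t * (star b * b) * star t) := by
      nth_rewrite 1 [h2]
      simp only [mul_assoc]
    rw [key]
    exact hE.1 _ h1 _ (wp_conj' hE (wp_sq hE b) t)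
  · have hcm := wp_comm hE (wp_sq hE b) t
    have h2' : a = a * (star t * t) := by rw [← mul_assoc]; exact h2
    have key : a * (star b * b) * star t * t = a * (star b * b) := by
      rw [mul_assoc (a * (star b * b)) (star t) t, mul_assoc a (star b * b) (star t * t),
        ← hcm]
      rw [← mul_assoc a (star t * t) (star b * b)]
      rw [← h2']
    exact key.symm

lemma dom_mul (hE : WeylPair E) {a b c d : S} (hca : Sdom E c a) (hdb : Sdom E d b) :
    Sdom E (c * d) (a * b) := by
  obtain ⟨c1, c2⟩ := hca
  obtain ⟨d1, d2⟩ := hdb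
  constructor
  · rw [star_mul]
    have key : (c * d) * (star b * star a) = (c * star a) * (a * (d * star b) * star a) := by
      nth_rewrite 1 [c2]
      simp only [mul_assoc]
    rw [key]
    exact hE.1 _ c1 _ (wp_conj' hE d1 a)
  · rw [star_mul]
    have hcm := wp_comm hE d1 a
    have key : (c * d) * (star b * star a) * (a * b) = c * d := by
      calc (c * d) * (star b * star a) * (a * b)
          = ((c * (d * star b)) * (star a * a)) * b := by simp only [mul_assoc]
        _ = (c * ((d * star b) * (star a * a))) * b := by
            rw [mul_assoc c (d * star b) (star a * a)]
        _ = (c * (star a * a * (d * star b))) * b := by rw [← hcm]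
        _ = ((c * star a * a) * (d * star b)) * b := by
            simp only [mul_assoc]
        _ = (c * (d * star b)) * b := by rw [← c2]
        _ = c * (d * star b * b) := by simp only [mul_assoc]
        _ = c * d := by rw [← d2]
    exact key.symm
lemma filt_up {U : Set S} (hU : IsFilt E U) {a b : S} (ha : a ∈ U) (h : Sdom E a b) :
    b ∈ U :=
  ((hU.2 b b).mpr ⟨a, ha, h, h⟩).1

lemma filt_lb {U : Set S} (hU : IsFilt E U) {a b : S} (ha : a ∈ U) (hb : b ∈ U) :
    ∃ c ∈ U, Sdom E c a ∧ Sdom E c b :=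
  (hU.2 a b).mp ⟨ha, hb⟩

lemma filt_lb1 {U : Set S} (hU : IsFilt E U) {a : S} (ha : a ∈ U) :
    ∃ c ∈ U, Sdom E c a := by
  obtain ⟨c, hc, h, -⟩ := filt_lb hU ha ha
  exact ⟨c, hc, h⟩

lemma filt_lb3 (hE : WeylPair E) {U : Set S} (hU : IsFilt E U) {a b c : S}
    (ha : a ∈ U) (hb : b ∈ U) (hc : c ∈ U) :
    ∃ d ∈ U, Sdom E d a ∧ Sdom E d b ∧ Sdom E d c := by
  obtain ⟨c₁, hc₁, h1, h2⟩ := filt_lb hU ha hb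
  obtain ⟨d, hd, h3, h4⟩ := filt_lb hU hc₁ hc
  exact ⟨d, hd, dom_trans hE h3 h1, dom_trans hE h3 h2, h4⟩

lemma mem_upcl {T : Set S} {t x : S} (ht : t ∈ T) (h : Sdom E t x) : x ∈ upcl E T :=
  ⟨t, ht, h⟩

lemma upcl_up (hE : WeylPair E) {T : Set S} {x y : S} (hx : x ∈ upcl E T)
    (h : Sdom E x y) : y ∈ upcl E T := by
  obtain ⟨t, ht, h'⟩ := hx
  exact ⟨t, ht, dom_trans hE h' h⟩

lemma prod_subset (hE : WeylPair E) {U V : Set S} (hU : IsFilt E U) (hV : IsFilt E V) :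
    U * V ⊆ upcl E (U * V) := by
  intro x hx
  rcases Set.mem_mul.mp hx with ⟨u, hu, v, hv, rfl⟩
  obtain ⟨u₀, hu₀, h₀⟩ := filt_lb1 hU hu
  obtain ⟨v₀, hv₀, h₁⟩ := filt_lb1 hV hv
  exact ⟨u₀ * v₀, Set.mul_mem_mul hu₀ hv₀, dom_mul hE h₀ h₁⟩

lemma prod_filt (hE : WeylPair E) {U V : Set S} (hU : IsFilt E U) (hV : IsFilt E V) :
    IsFilt E (upcl E (U * V)) := by
  constructor
  · obtain ⟨u, hu⟩ := hU.1
    obtain ⟨v, hv⟩ := hV.1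
    exact ⟨u * v, prod_subset hE hU hV (Set.mul_mem_mul hu hv)⟩
  · intro a b
    constructor
    · rintro ⟨⟨t, ht, hta⟩, ⟨t', ht', htb⟩⟩
      rcases Set.mem_mul.mp ht with ⟨u, hu, v, hv, rfl⟩
      rcases Set.mem_mul.mp ht' with ⟨u', hu', v', hv', rfl⟩
      obtain ⟨u₀, hu₀, g1, g2⟩ := filt_lb hU hu hu'
      obtain ⟨v₀, hv₀, g3, g4⟩ := filt_lb hV hv hv'
      exact ⟨u₀ * v₀, prod_subset hE hU hV (Set.mul_mem_mul hu₀ hv₀),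
        dom_trans hE (dom_mul hE g1 g3) hta, dom_trans hE (dom_mul hE g2 g4) htb⟩
    · rintro ⟨c, hc, h1, h2⟩
      exact ⟨upcl_up hE hc h1, upcl_up hE hc h2⟩

lemma filt_star (hE : WeylPair E) {U : Set S} (hU : IsFilt E U) : IsFilt E (star U) := by
  constructor
  · obtain ⟨u, hu⟩ := hU.1
    exact ⟨star u, by rwa [Set.mem_star, star_star]⟩
  · intro a b
    constructor
    · rintro ⟨ha, hb⟩
      rw [Set.mem_star] at ha hb
      obtain ⟨c, hc, h1, h2⟩ := filt_lb hU ha hb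
      refine ⟨star c, by rwa [Set.mem_star, star_star], ?_, ?_⟩
      · simpa using dom_star hE h1
      · simpa using dom_star hE h2
    · rintro ⟨c, hc, h1, h2⟩
      rw [Set.mem_star] at hc
      constructor
      · rw [Set.mem_star]
        exact filt_up hU hc (by simpa using dom_star hE h1)
      · rw [Set.mem_star]
        exact filt_up hU hc (by simpa using dom_star hE h2)
section Main

variable {U V : Set S}

/-- Range compatibility: every `u u*` for `u ∈ U` dominates some `p p*` with `p ∈ UV`. -/
lemma key_r (hE : WeylPair E) (hU : IsFilt E U) (hV : IsFilt E V)
    (h : upcl E (star U * U) = upcl E (V * star V)) {u : S} (hu : u ∈ U) :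
    ∃ p ∈ U * V, Sdom E (p * star p) (u * star u) := by
  obtain ⟨u₃, hu₃, h₃u⟩ := filt_lb1 hU hu
  obtain ⟨u₄, hu₄, h₄₃⟩ := filt_lb1 hU hu₃
  obtain ⟨u₅, hu₅, h₅₄⟩ := filt_lb1 hU hu₄
  have hm : star u₄ * u₄ ∈ upcl E (star U * U) :=
    ⟨star u₅ * u₅,
      Set.mul_mem_mul (Set.mem_star.mpr (by rwa [star_star])) hu₅,
      dom_mul hE (dom_star hE h₅₄) h₅₄⟩
  rw [h] at hm
  obtain ⟨q, hq, hq'⟩ := hm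
  rcases Set.mem_mul.mp hq with ⟨v₁, hv₁, v₂', hv₂', rfl⟩
  rw [Set.mem_star] at hv₂'
  obtain ⟨v₃, hv₃, k1, k2⟩ := filt_lb hV hv₁ hv₂'
  have s2 : Sdom E (v₃ * star v₃) (star u₄ * u₄) := by
    refine dom_trans hE ?_ hq'
    have := dom_mul hE k1 (dom_star hE k2)
    rwa [star_star] at this
  have s5 : Sdom E (u₄ * (v₃ * star v₃)) u :=
    dom_trans hE (dom_mul hE h₄₃ s2) (dom_sq hE h₃u u₄)
  have s6 := dom_star hE s5
  have e6 : star (u₄ * (v₃ * star v₃)) = (v₃ * star v₃) * star u₄ := by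
    simp only [star_mul, star_star, mul_assoc]
  rw [e6] at s6
  have s7 : Sdom E (u₄ * ((v₃ * star v₃) * star u₄)) (u * star u) :=
    dom_mul hE (dom_trans hE h₄₃ h₃u) s6
  refine ⟨u₄ * v₃, Set.mul_mem_mul hu₄ hv₃, ?_⟩
  have e7 : (u₄ * v₃) * star (u₄ * v₃) = u₄ * ((v₃ * star v₃) * star u₄) := by
    simp only [star_mul, mul_assoc]
  rw [e7]
  exact s7

/-- `V ⊆ (U* W')^≲` whenever `W'` contains `(UV)^≲`. -/
lemma V_sub (hE : WeylPair E) (hU : IsFilt E U) (hV : IsFilt E V)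
    (h : upcl E (star U * U) = upcl E (V * star V)) {W' : Set S}
    (hsub : upcl E (U * V) ⊆ W') : V ⊆ upcl E (star U * W') := by
  intro v hv
  obtain ⟨c, hc, hcv⟩ := filt_lb1 hV hv
  obtain ⟨d, hd, hdc⟩ := filt_lb1 hV hc
  have hm : c * star c ∈ upcl E (V * star V) :=
    ⟨d * star d,
      Set.mul_mem_mul hd (Set.mem_star.mpr (by rwa [star_star])),
      dom_mul hE hdc (dom_star hE hdc)⟩
  rw [← h] at hm
  obtain ⟨r, hr, hrcc⟩ := hm
  rcases Set.mem_mul.mp hr with ⟨u₁', hu₁', u₂, hu₂, rfl⟩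
  have q1 : Sdom E ((u₁' * u₂) * d) ((c * star c) * c) := dom_mul hE hrcc hdc
  have q2 : Sdom E ((c * star c) * c) v := dom_mulE hE (wp_sq' hE c) hcv
  have q3 := dom_trans hE q1 q2
  refine ⟨u₁' * (u₂ * d), Set.mul_mem_mul hu₁' (hsub (prod_subset hE hU hV
    (Set.mul_mem_mul hu₂ hd))), ?_⟩
  rw [← mul_assoc]
  exact q3

/-- `(U* (UV)^≲)^≲ ⊆ V`. -/
lemma starUW_sub_V (hE : WeylPair E) (hU : IsFilt E U) (hV : IsFilt E V)
    (h : upcl E (star U * U) = upcl E (V * star V)) :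
    upcl E (star U * upcl E (U * V)) ⊆ V := by
  rintro x ⟨t, ht, htx⟩
  rcases Set.mem_mul.mp ht with ⟨u'', hu'', w, hw, rfl⟩
  rw [Set.mem_star] at hu''
  obtain ⟨r, hr, hrw⟩ := hw
  rcases Set.mem_mul.mp hr with ⟨u', hu', v', hv', rfl⟩
  obtain ⟨u₁, hu₁, hu₁u'⟩ := filt_lb1 hU hu'
  obtain ⟨v₀, hv₀, hv₀v'⟩ := filt_lb1 hV hv'
  obtain ⟨u₀, hu₀, hu₀u, hu₀u₁⟩ := filt_lb hU hu'' hu₁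
  have c1 : Sdom E (star u₀) u'' := by
    have := dom_star hE hu₀u
    rwa [star_star] at this
  have c2 : Sdom E (star u₀ * (u₁ * v₀)) x :=
    dom_trans hE (dom_mul hE c1 (dom_trans hE (dom_mul hE hu₁u' hv₀v') hrw)) htx
  obtain ⟨u₂, hu₂, hu₂u₀, hu₂u₁⟩ := filt_lb hU hu₀ hu₁
  obtain ⟨u₃, hu₃, hu₃u₂⟩ := filt_lb1 hU hu₂
  have hm : star u₂ * u₂ ∈ upcl E (star U * U) :=
    ⟨star u₃ * u₃,
      Set.mul_mem_mul (Set.mem_star.mpr (by rwa [star_star])) hu₃,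
      dom_mul hE (dom_star hE hu₃u₂) hu₃u₂⟩
  rw [h] at hm
  obtain ⟨q, hq, hqm⟩ := hm
  rcases Set.mem_mul.mp hq with ⟨v₁, hv₁, v₂', hv₂', rfl⟩
  rw [Set.mem_star] at hv₂'
  have n1 : Sdom E (star u₂ * u₂) (star u₀ * u₁) :=
    dom_mul hE (dom_star hE hu₂u₀) hu₂u₁
  have n2 : Sdom E (v₁ * v₂') (star u₀ * u₁) := dom_trans hE hqm n1
  obtain ⟨v₃, hv₃, l1, l2, l3⟩ := filt_lb3 hE hV hv₁ hv₂' hv₀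
  obtain ⟨v₄, hv₄, hv₄v₃⟩ := filt_lb1 hV hv₃
  have n3 : Sdom E (v₃ * star v₃) (v₁ * v₂') := by
    have := dom_mul hE l1 (dom_star hE l2)
    rwa [star_star] at this
  have n4 : Sdom E (v₃ * star v₃) (star u₀ * u₁) := dom_trans hE n3 n2
  have n5 : Sdom E ((v₃ * star v₃) * v₄) ((star u₀ * u₁) * v₀) :=
    dom_mul hE n4 (dom_trans hE hv₄v₃ l3)
  have n6 : Sdom E ((star u₀ * u₁) * v₀) x := by
    rwa [mul_assoc]
  have n7 := dom_trans hE n5 n6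
  rw [dom_absorb hE hv₄v₃] at n7
  exact filt_up hV hv₄ n7
/-- `W' ⊆ (U (U* W')^≲)^≲` for any filter `W'`. -/
lemma sub_UV' (hE : WeylPair E) (hU : IsFilt E U) {W' : Set S} (hW' : IsFilt E W') :
    W' ⊆ upcl E (U * upcl E (star U * W')) := by
  intro w hwW
  obtain ⟨w₀, hw₀, hw₀w⟩ := filt_lb1 hW' hwW
  obtain ⟨w₁, hw₁, hw₁w₀⟩ := filt_lb1 hW' hw₀
  obtain ⟨w₂, hw₂, hw₂w₁⟩ := filt_lb1 hW' hw₁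
  obtain ⟨u, hu⟩ := hU.1
  obtain ⟨u₀, hu₀, hu₀u⟩ := filt_lb1 hU hu
  have htV' : star u * w₁ ∈ upcl E (star U * W') :=
    ⟨star u₀ * w₂,
      Set.mul_mem_mul (Set.mem_star.mpr (by rwa [star_star])) hw₂,
      dom_mul hE (dom_star hE hu₀u) hw₂w₁⟩
  refine ⟨u * (star u * w₁), Set.mul_mem_mul hu htV', ?_⟩
  rw [← mul_assoc]
  exact dom_mulE hE (wp_sq' hE u) (dom_trans hE hw₁w₀ hw₀w)

/-- `(U (U* W')^≲)^≲ ⊆ W'` when `W'` is a filter containing `(UV)^≲`. -/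
lemma UV'_sub (hE : WeylPair E) (hU : IsFilt E U) (hV : IsFilt E V)
    (h : upcl E (star U * U) = upcl E (V * star V)) {W' : Set S} (hW' : IsFilt E W')
    (hsub : upcl E (U * V) ⊆ W') :
    upcl E (U * upcl E (star U * W')) ⊆ W' := by
  rintro x ⟨t, ht, htx⟩
  rcases Set.mem_mul.mp ht with ⟨u, hu, s, hs, rfl⟩
  obtain ⟨r, hr, hrs⟩ := hs
  rcases Set.mem_mul.mp hr with ⟨u'', hu'', w, hw, rfl⟩
  rw [Set.mem_star] at hu''
  obtain ⟨u₀, hu₀, hu₀u, hu₀u''⟩ := filt_lb hU hu hu''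
  obtain ⟨u₁, hu₁, hu₁u₀⟩ := filt_lb1 hU hu₀
  obtain ⟨w₀, hw₀, hw₀w⟩ := filt_lb1 hW' hw
  have h3 : Sdom E (u₀ * (u'' * w)) x := dom_trans hE (dom_mul hE hu₀u hrs) htx
  have c1 : Sdom E (star u₁) u'' := by
    have := dom_star hE (dom_trans hE hu₁u₀ hu₀u'')
    rwa [star_star] at this
  have d2 : Sdom E ((u₁ * star u₁) * w₀) ((u₀ * u'') * w) :=
    dom_mul hE (dom_mul hE hu₁u₀ c1) hw₀w
  have d3 : Sdom E ((u₁ * star u₁) * w₀) x := by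
    refine dom_trans hE d2 ?_
    rwa [mul_assoc]
  obtain ⟨p, hpUV, hpp⟩ := key_r hE hU hV h hu₁
  have hpW' : p ∈ W' := hsub (prod_subset hE hU hV hpUV)
  obtain ⟨w₃, hw₃, hw₃p, hw₃w₀⟩ := filt_lb hW' hpW' hw₀
  obtain ⟨w₄, hw₄, hw₄w₃⟩ := filt_lb1 hW' hw₃
  have s2 : Sdom E (w₃ * star w₃) (u₁ * star u₁) :=
    dom_trans hE (dom_mul hE hw₃p (dom_star hE hw₃p)) hpp
  have s3 : Sdom E ((w₃ * star w₃) * w₄) ((u₁ * star u₁) * w₀) :=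
    dom_mul hE s2 (dom_trans hE hw₄w₃ hw₃w₀)
  have s4 := dom_trans hE s3 d3
  rw [dom_absorb hE hw₄w₃] at s4
  exact filt_up hW' hw₄ s4

end Main

end Lemmas
lemma star_univ_set : (star (Set.univ : Set S)) = Set.univ := by
  ext x; simp [Set.mem_star]

lemma ultra_star (hE : WeylPair E) {U : Set S} (hU : IsUltra E U) : IsUltra E (star U) := by
  obtain ⟨hUf, hUne, hUmax⟩ := hU
  refine ⟨filt_star hE hUf, ?_, ?_⟩
  · intro hcon
    apply hUne
    rw [← star_star U, hcon, star_univ_set]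
  · intro V hV hsub
    have hsub' : U ⊆ star V := by
      intro x hx
      rw [Set.mem_star]
      exact hsub (by rwa [Set.mem_star, star_star])
    rcases hUmax (star V) (filt_star hE hV) hsub' with h | h
    · left; rw [← star_star V, h]
    · right; rw [← star_star V, h, star_univ_set]

theorem stmt7 (E : Set S) (hE : WeylPair E) :
    (∀ U : Set S, IsUltra E U ↔ IsUltra E (star U)) ∧
    (∀ U V : Set S, IsFilt E U → IsUltra E V →
      upcl E (star U * U) = upcl E (V * star V) → IsUltra E (upcl E (U * V))) := by
  constructor
  · intro U
    constructor
    · exact ultra_star hE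
    · intro h
      have := ultra_star hE h
      rwa [star_star] at this
  · intro U V hU hVu h
    obtain ⟨hV, hVne, hVmax⟩ := hVu
    have hWf : IsFilt E (upcl E (U * V)) := prod_filt hE hU hV
    refine ⟨hWf, ?_, ?_⟩
    · -- properness
      intro hWuniv
      apply hVne
      apply Set.eq_univ_of_forall
      intro y
      have hyW : y ∈ upcl E (U * V) := by rw [hWuniv]; trivial
      obtain ⟨c, hc, hcy⟩ := filt_lb1 hWf hyW
      obtain ⟨u, hu⟩ := hU.1
      obtain ⟨u₀, hu₀, hu₀u⟩ := filt_lb1 hU hu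
      have he : star u * u₀ ∈ E := by
        have h1 := (dom_star hE hu₀u).1
        rw [star_star] at h1
        simpa using wp_starE hE h1
      have hd : Sdom E (star u * u₀ * c) y := dom_mulE hE he hcy
      have hmem : star u * (u₀ * c) ∈ star U * upcl E (U * V) :=
        Set.mul_mem_mul (Set.mem_star.mpr (by rwa [star_star]))
          (by rw [hWuniv]; trivial)
      have hy : y ∈ upcl E (star U * upcl E (U * V)) :=
        ⟨star u * (u₀ * c), hmem, by rw [← mul_assoc]; exact hd⟩
      exact starUW_sub_V hE hU hV h hy
    · -- maximality
      intro W'' hW'' hsub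
      by_cases hcase : W'' = Set.univ
      · right; exact hcase
      left
      have hV'' : IsFilt E (upcl E (star U * W'')) := prod_filt hE (filt_star hE hU) hW''
      have hVsub : V ⊆ upcl E (star U * W'') := V_sub hE hU hV h hsub
      have heq : W'' = upcl E (U * upcl E (star U * W'')) :=
        subset_antisymm (sub_UV' hE hU hW'') (UV'_sub hE hU hV h hW'' hsub)
      rcases hVmax _ hV'' hVsub with hVV | hVuniv
      · rw [heq, hVV]
      · exfalso
        apply hcase
        apply Set.eq_univ_of_forall
        intro y
        have hyV'' : y ∈ upcl E (star U * W'') := by rw [hVuniv]; trivial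
        obtain ⟨c, hc, hcy⟩ := filt_lb1 hV'' hyV''
        obtain ⟨u, hu⟩ := hU.1
        obtain ⟨u₀, hu₀, hu₀u⟩ := filt_lb1 hU hu
        have he : u * star u₀ ∈ E := by
          simpa using wp_starE hE hu₀u.1
        have hd : Sdom E (u * star u₀ * c) y := dom_mulE hE he hcy
        have hy : y ∈ upcl E (U * upcl E (star U * W'')) :=
          ⟨u * (star u₀ * c), Set.mul_mem_mul hu (by rw [hVuniv]; trivial),
            by rw [← mul_assoc]; exact hd⟩
        rw [← heq] at hy
        exact hy
end

section
/- Let (S, E) be a Weyl *-semigroup containing an absorbing zero, i.e. an element 0 ∈ S with 0a = a0 = 0 for all a ∈ S. Then the set 𝒰(S)⁰ of unit ultrafilters, i.e. ultrafilters U with U = (UU*)^≲, equipped with the subspace topology inherited from the Weyl groupoid 𝒰(S), is Hausdorff. -/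
open scoped Pointwise

variable {S : Type*} [Semigroup S] [StarMul S]

section Aux

variable {E : Set S}

lemma WP.star_mem (hE : WeylPair E) {a : S} (ha : a ∈ E) : star a ∈ E := by
  have h := hE.2.1
  rw [← h]
  exact ⟨a, ha, rfl⟩

lemma WP.comm (hE : WeylPair E) (a : S) {e : S} (he : e ∈ E) :
    star a * a * e = e * (star a * a) := hE.2.2.2.2 a e he

lemma sdom_trans (hE : WeylPair E) {a b c : S} (h1 : Sdom E a b) (h2 : Sdom E b c) :
    Sdom E a c := by
  constructor
  · have key : a * star c = (a * star b) * (b * star c) := by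
      conv_lhs => rw [h1.2]
      simp only [mul_assoc]
    rw [key]
    exact hE.1 _ h1.1 _ h2.1
  · have : a * star c * c = a := by
      calc a * star c * c = (a * star b * b) * star c * c := by rw [← h1.2]
        _ = a * star b * (b * star c * c) := by simp only [mul_assoc]
        _ = a * star b * b := by rw [← h2.2]
        _ = a := h1.2.symm
    exact this.symm

/-- `c ≲ u` and `c ≲ v` imply `c v* ≲ u v*`. -/
lemma lemA (hE : WeylPair E) {c u v : S} (hcu : Sdom E c u) (hcv : Sdom E c v) :
    Sdom E (c * star v) (u * star v) := by
  have k1 : c * star v * star (u * star v) = c * star u := by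
    rw [star_mul, star_star]
    calc c * star v * (v * star u) = (c * star v * v) * star u := by simp only [mul_assoc]
      _ = c * star u := by rw [← hcv.2]
  constructor
  · rw [k1]; exact hcu.1
  · rw [k1]
    calc c * star v = (c * star u * u) * star v := by rw [← hcu.2]
      _ = c * star u * (u * star v) := by simp only [mul_assoc]

/-- `w ≲ f`, with `w, v, f ∈ E`, implies `w v ≲ f`. -/
lemma lemC1 (hE : WeylPair E) {w v f : S} (hwf : Sdom E w f) (hwE : w ∈ E)
    (hvE : v ∈ E) (hfE : f ∈ E) : Sdom E (w * v) f := by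
  constructor
  · rw [mul_assoc]
    exact hE.1 _ hwE _ (hE.1 _ hvE _ (WP.star_mem hE hfE))
  · have : w * v * star f * f = w * v := by
      calc w * v * star f * f = w * (v * (star f * f)) := by simp only [mul_assoc]
        _ = w * (star f * f * v) := by rw [← WP.comm hE f hvE]
        _ = (w * star f * f) * v := by simp only [mul_assoc]
        _ = w * v := by rw [← hwf.2]
    exact this.symm

/-- `g' ≲ g` and `w ∈ E` imply `w g' ≲ g`. -/
lemma lemC2 (hE : WeylPair E) {w g' g : S} (hg' : Sdom E g' g) (hwE : w ∈ E) :
    Sdom E (w * g') g := by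
  constructor
  · rw [mul_assoc]
    exact hE.1 _ hwE _ hg'.1
  · have : w * g' * star g * g = w * g' := by
      calc w * g' * star g * g = w * (g' * star g * g) := by simp only [mul_assoc]
        _ = w * g' := by rw [← hg'.2]
    exact this.symm

/-- `w ≲ f`, `v ≲ g` (all in `E`) imply `w v ≲ f g`. -/
lemma lemC3 (hE : WeylPair E) {w v f g : S} (hwf : Sdom E w f) (hvg : Sdom E v g)
    (hwE : w ∈ E) (hvE : v ∈ E) (hfE : f ∈ E) (hgE : g ∈ E) :
    Sdom E (w * v) (f * g) := by
  constructor
  · have : w * v * star (f * g) = w * ((v * star g) * star f) := by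
      rw [star_mul]; simp only [mul_assoc]
    rw [this]
    exact hE.1 _ hwE _ (hE.1 _ hvg.1 _ (WP.star_mem hE hfE))
  · have : w * v * star (f * g) * (f * g) = w * v := by
      calc w * v * star (f * g) * (f * g)
          = w * (v * (star g * ((star f * f) * g))) := by rw [star_mul]; simp only [mul_assoc]
        _ = w * (v * (star g * (g * (star f * f)))) := by rw [WP.comm hE f hgE]
        _ = (w * (v * star g * g)) * (star f * f) := by simp only [mul_assoc]
        _ = w * (v * (star f * f)) := by rw [← hvg.2]; simp only [mul_assoc]
        _ = w * (star f * f * v) := by rw [← WP.comm hE f hvE]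
        _ = (w * star f * f) * v := by simp only [mul_assoc]
        _ = w * v := by rw [← hwf.2]
    exact this.symm

/-- `w ≲ e`, `w ≲ f`, `e, f ∈ E` imply `w ≲ e f`. -/
lemma lemB (hE : WeylPair E) {w e f : S} (hwe : Sdom E w e) (hwf : Sdom E w f)
    (heE : e ∈ E) (hfE : f ∈ E) : Sdom E w (e * f) := by
  constructor
  · have : w * star (e * f) = (w * star f) * star e := by
      rw [star_mul, mul_assoc]
    rw [this]
    exact hE.1 _ hwf.1 _ (WP.star_mem hE heE)
  · have : w * star (e * f) * (e * f) = w := by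
      calc w * star (e * f) * (e * f)
          = w * (star f * ((star e * e) * f)) := by rw [star_mul]; simp only [mul_assoc]
        _ = w * (star f * (f * (star e * e))) := by rw [WP.comm hE e hfE]
        _ = (w * star f * f) * (star e * e) := by simp only [mul_assoc]
        _ = w * (star e * e) := by rw [← hwf.2]
        _ = w * star e * e := by rw [mul_assoc]
        _ = w := hwe.2.symm
    exact this.symm

section Zero

variable {z : S}

lemma star_z (hz : ∀ a : S, z * a = z ∧ a * z = z) : star z = z := by
  have h1 : z * star z = star z := by
    have := congrArg star ((hz (star z)).1)
    simpa [star_mul] using this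
  rw [← h1, (hz (star z)).1]

lemma z_mem_E (hE : WeylPair E) (hz : ∀ a : S, z * a = z ∧ a * z = z) : z ∈ E := by
  have : star z * z ∈ E := hE.2.2.2.1 z
  rwa [star_z hz, (hz z).1] at this

lemma z_bot (hE : WeylPair E) (hz : ∀ a : S, z * a = z ∧ a * z = z) (b : S) :
    Sdom E z b := by
  constructor
  · rw [(hz (star b)).1]; exact z_mem_E hE hz
  · rw [(hz (star b)).1, (hz b).1]

lemma sdom_z (hz : ∀ a : S, z * a = z ∧ a * z = z) {c : S} (h : Sdom E c z) : c = z := by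
  have := h.2
  rwa [star_z hz, (hz c).2, (hz z).1] at this

lemma filt_univ (hE : WeylPair E) (hz : ∀ a : S, z * a = z ∧ a * z = z) {U : Set S}
    (hF : IsFilt E U) (hzU : z ∈ U) : U = Set.univ := by
  ext x
  simp only [Set.mem_univ, iff_true]
  exact ((hF.2 x x).mpr ⟨z, hzU, z_bot hE hz x, z_bot hE hz x⟩).1

end Zero

lemma filt_up_s8 (hE : WeylPair E) {U : Set S} (hF : IsFilt E U) {c a : S}
    (hc : c ∈ U) (hca : Sdom E c a) : a ∈ U := by
  obtain ⟨d, hd, hdc, -⟩ := (hF.2 c c).mp ⟨hc, hc⟩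
  exact ((hF.2 a c).mpr ⟨d, hd, sdom_trans hE hdc hca, hdc⟩).1

/-- In a unit ultrafilter, every element dominates an element of `U ∩ E`. -/
lemma unitE (hE : WeylPair E) {U : Set S} (hF : IsFilt E U)
    (hUu : U = upcl E (U * star U)) {a : S} (ha : a ∈ U) :
    ∃ w ∈ U, w ∈ E ∧ Sdom E w a := by
  rw [hUu] at ha
  obtain ⟨t, ht, hta⟩ := ha
  obtain ⟨u, hu, y, hy, rfl⟩ := Set.mem_mul.mp ht
  have hv : star y ∈ U := hy
  have hyv : y = star (star y) := (star_star y).symm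
  rw [hyv] at hta
  obtain ⟨c, hc, hcu, hcv⟩ := (hF.2 u (star y)).mp ⟨hu, hv⟩
  obtain ⟨d, hd, hdc, -⟩ := (hF.2 c c).mp ⟨hc, hc⟩
  refine ⟨c * star (star y), ?_, hcv.1, sdom_trans hE (lemA hE hcu hcv) hta⟩
  rw [hUu]
  exact ⟨d * star (star y), Set.mul_mem_mul hd (Set.star_mem_star.mpr hv),
    lemA hE hdc (sdom_trans hE hdc hcv)⟩

lemma unit_directedE (hE : WeylPair E) {U : Set S} (hF : IsFilt E U)
    (hUu : U = upcl E (U * star U)) {e f : S} (he : e ∈ U) (hf : f ∈ U) :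
    ∃ w ∈ U, w ∈ E ∧ Sdom E w e ∧ Sdom E w f := by
  obtain ⟨c, hc, hce, hcf⟩ := (hF.2 e f).mp ⟨he, hf⟩
  obtain ⟨w, hw, hwE, hwc⟩ := unitE hE hF hUu hc
  exact ⟨w, hw, hwE, sdom_trans hE hwc hce, sdom_trans hE hwc hcf⟩

/-- Unit ultrafilters are multiplicative on their `E`-part. -/
lemma unit_mul (hE : WeylPair E) {U : Set S} (hF : IsFilt E U)
    (hUu : U = upcl E (U * star U)) {e f : S} (he : e ∈ U) (heE : e ∈ E)
    (hf : f ∈ U) (hfE : f ∈ E) : e * f ∈ U := by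
  obtain ⟨w, hw, hwE, hwe, hwf⟩ := unit_directedE hE hF hUu he hf
  exact filt_up_s8 hE hF hw (lemB hE hwe hwf heE hfE)

/-- Separation: two distinct unit ultrafilters contain `E`-elements with product `z`. -/
lemma separation (hE : WeylPair E) {z : S} (hz : ∀ a : S, z * a = z ∧ a * z = z)
    {U V : Set S} (hU : IsUltra E U) (hUu : U = upcl E (U * star U))
    (hV : IsUltra E V) (hVu : V = upcl E (V * star V)) (hUV : U ≠ V) :
    ∃ f g : S, f ∈ U ∧ f ∈ E ∧ g ∈ V ∧ g ∈ E ∧ f * g = z := by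
  set W := {y : S | ∃ f, (f ∈ U ∧ f ∈ E) ∧ ∃ g, (g ∈ V ∧ g ∈ E) ∧ Sdom E (f * g) y}
    with hWdef
  obtain ⟨a0, ha0⟩ := hU.1.1
  obtain ⟨f0, hf0U, hf0E, -⟩ := unitE hE hU.1 hUu ha0
  obtain ⟨b0, hb0⟩ := hV.1.1
  obtain ⟨g0, hg0U, hg0E, -⟩ := unitE hE hV.1 hVu hb0
  have hUW : ∀ a ∈ U, a ∈ W := by
    intro a ha
    obtain ⟨f, hfU, hfE, hfa⟩ := unitE hE hU.1 hUu ha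
    obtain ⟨w, hwU, hwE, hwf⟩ := unitE hE hU.1 hUu hfU
    exact ⟨w, ⟨hwU, hwE⟩, g0, ⟨hg0U, hg0E⟩,
      sdom_trans hE (lemC1 hE hwf hwE hg0E hfE) hfa⟩
  have hVW : ∀ b ∈ V, b ∈ W := by
    intro b hb
    obtain ⟨g, hgV, hgE, hgb⟩ := unitE hE hV.1 hVu hb
    obtain ⟨v, hvV, hvE, hvg⟩ := unitE hE hV.1 hVu hgV
    exact ⟨f0, ⟨hf0U, hf0E⟩, v, ⟨hvV, hvE⟩,
      sdom_trans hE (lemC2 hE hvg hf0E) hgb⟩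
  have hWfilt : IsFilt E W := by
    constructor
    · exact ⟨a0, hUW a0 ha0⟩
    · intro y1 y2
      constructor
      · rintro ⟨⟨f1, ⟨hf1U, hf1E⟩, g1, ⟨hg1V, hg1E⟩, h1⟩,
          ⟨f2, ⟨hf2U, hf2E⟩, g2, ⟨hg2V, hg2E⟩, h2⟩⟩
        obtain ⟨w, hwU, hwE, hwf1, hwf2⟩ := unit_directedE hE hU.1 hUu hf1U hf2U
        obtain ⟨v, hvV, hvE, hvg1, hvg2⟩ := unit_directedE hE hV.1 hVu hg1V hg2V
        obtain ⟨w', hw'U, hw'E, hw'w⟩ := unitE hE hU.1 hUu hwU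
        obtain ⟨v', hv'V, hv'E, hv'v⟩ := unitE hE hV.1 hVu hvV
        refine ⟨w * v, ⟨w', ⟨hw'U, hw'E⟩, v', ⟨hv'V, hv'E⟩,
          lemC3 hE hw'w hv'v hw'E hv'E hwE hvE⟩,
          sdom_trans hE (lemC3 hE hwf1 hvg1 hwE hvE hf1E hg1E) h1,
          sdom_trans hE (lemC3 hE hwf2 hvg2 hwE hvE hf2E hg2E) h2⟩
      · rintro ⟨c, ⟨f, hf, g, hg, hfg⟩, hc1, hc2⟩
        exact ⟨⟨f, hf, g, hg, sdom_trans hE hfg hc1⟩,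
          ⟨f, hf, g, hg, sdom_trans hE hfg hc2⟩⟩
  rcases hU.2.2 W hWfilt (fun a ha => hUW a ha) with hWU | hWuniv
  · exfalso
    have hVU : V ⊆ U := fun b hb => hWU ▸ hVW b hb
    rcases hV.2.2 U hU.1 hVU with h | h
    · exact hUV h
    · exact hU.2.1 h
  · have hzW : z ∈ W := by rw [hWuniv]; exact Set.mem_univ z
    obtain ⟨f, ⟨hfU, hfE⟩, g, ⟨hgV, hgE⟩, hfgz⟩ := hzW
    exact ⟨f, g, hfU, hfE, hgV, hgE, sdom_z hz hfgz⟩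

end Aux

/-- The unit space of the Weyl groupoid: unit ultrafilters, i.e. ultrafilters `U`
with `U = (UU*)^≲`, topologised by the sets `{U : a ∈ U}`, `a ∈ S` (this is the
subspace topology inherited from the Weyl groupoid `𝒰(S)`). -/
theorem stmt8 (E : Set S) (hE : WeylPair E) (z : S)
    (hz : ∀ a : S, z * a = z ∧ a * z = z) :
    @T2Space {U : Set S // IsUltra E U ∧ U = upcl E (U * star U)}
      (TopologicalSpace.generateFrom {V | ∃ a : S, V = {U | a ∈ U.1}}) := by
  refine @T2Space.mk {U : Set S // IsUltra E U ∧ U = upcl E (U * star U)}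
    (TopologicalSpace.generateFrom {V | ∃ a : S, V = {U | a ∈ U.1}}) ?_
  intro x y hxy
  have hne : x.1 ≠ y.1 := fun h => hxy (Subtype.ext h)
  obtain ⟨f, g, hfU, hfE, hgV, hgE, hfg⟩ :=
    separation hE hz x.2.1 x.2.2 y.2.1 y.2.2 hne
  refine ⟨{U | f ∈ U.1}, {U | g ∈ U.1},
    TopologicalSpace.isOpen_generateFrom_of_mem ⟨f, rfl⟩,
    TopologicalSpace.isOpen_generateFrom_of_mem ⟨g, rfl⟩, hfU, hgV, ?_⟩
  rw [Set.disjoint_left]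
  intro W hWf hWg
  have hmul : f * g ∈ W.1 := unit_mul hE W.2.1.1 W.2.2 hWf hfE hWg hgE
  rw [hfg] at hmul
  exact W.2.1.2.1 (filt_univ hE hz W.2.1.1 hmul)
end

section
/- Let A be an Archimedean, infinitesimal-free, proper *-ring. Then the relation a ≤ b defined by ⌈a − b⌉ = 0 is a partial order on A, and for all a, b, c ∈ A: a ≤ b implies a + c ≤ b + c and cac* ≤ cbc*. -/
open scoped ENNReal

/-- `B_Σ`: the set of finite sums `p₁ + ⋯ + p_k` (`k ≥ 1`) with each `pᵢ = bᵢbᵢ*`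
for some `bᵢ ∈ B`. -/
def starSums {A : Type*} [NonUnitalRing A] [StarRing A] (B : Set A) : Set A :=
  {x | ∃ (n : ℕ) (f : Fin (n + 1) → A), (∀ i, f i ∈ B) ∧ x = ∑ i, f i * star (f i)}

/-- `⌈a⌉ = sup_b inf {m/n : m(bb*) − n(bab*) ∈ A_Σ}` computed in `[0,∞]`. -/
noncomputable def ceil' {A : Type*} [NonUnitalRing A] [StarRing A] (a : A) : ℝ≥0∞ :=
  ⨆ b : A, sInf {q : ℝ≥0∞ | ∃ m n : ℕ, 0 < m ∧ 0 < n ∧ q = (m : ℝ≥0∞) / (n : ℝ≥0∞) ∧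
    m • (b * star b) - n • (b * a * star b) ∈ starSums (Set.univ : Set A)}

/-- The order `a ≤ b ⇔ ⌈a − b⌉ = 0`. -/
def cle {A : Type*} [NonUnitalRing A] [StarRing A] (a b : A) : Prop :=
  ceil' (a - b) = 0

/-!
A certificate `m·bb* − n·bab* ∈ A_Σ` says `n·bab* ≤ m·bb*` in the preorder whose positive cone is
`A_Σ`, and `⌈a⌉ = 0` says that for every `b` such certificates exist with `m/n` arbitrarily small.
Reflexivity and translation invariance are immediate, and antisymmetry is infinitesimal-freeness.
Transitivity amounts to `⌈x⌉ = ⌈y⌉ = 0 ⇒ ⌈x + y⌉ = 0`: scale the certificates for `x` and `y` to a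
common `n` and add them. For congruence, `⌈−cc*⌉ = 0` and the Archimedean property give a single
certificate `n₁·(bc)(bc)* ≤ m₁·bb*`; chaining it with certificates for `x` at `bc` of ratio
`< 1/(N m₁)` yields certificates for `cxc*` at `b` of ratio `< 1/N`.
-/

section StarSums

variable {A : Type*} [NonUnitalRing A] [StarRing A]

lemma mul_star_mem_starSums (b : A) : b * star b ∈ starSums (Set.univ : Set A) :=
  ⟨0, fun _ => b, fun _ => Set.mem_univ _, by simp⟩

lemma add_mem_starSums {x y : A} (hx : x ∈ starSums (Set.univ : Set A))
    (hy : y ∈ starSums (Set.univ : Set A)) : x + y ∈ starSums (Set.univ : Set A) := by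
  obtain ⟨m, f, -, rfl⟩ := hx
  obtain ⟨n, g, -, rfl⟩ := hy
  exact ⟨m + 1 + n, (Fin.append f g : Fin (m + 1 + (n + 1)) → A), fun _ => Set.mem_univ _,
    ((Fin.sum_univ_add fun i => Fin.append f g i * star (Fin.append f g i)).trans
      (by simp only [Fin.append_left, Fin.append_right])).symm⟩

lemma nsmul_mem_starSums {x : A} (hx : x ∈ starSums (Set.univ : Set A)) {k : ℕ} (hk : k ≠ 0) :
    k • x ∈ starSums (Set.univ : Set A) := by
  induction k with
  | zero => exact absurd rfl hk
  | succ k ih =>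
    rcases eq_or_ne k 0 with rfl | hk'
    · simpa using hx
    · rw [succ_nsmul]; exact add_mem_starSums (ih hk') hx

lemma conj_mem_starSums {x : A} (hx : x ∈ starSums (Set.univ : Set A)) (c : A) :
    c * x * star c ∈ starSums (Set.univ : Set A) := by
  obtain ⟨n, f, -, rfl⟩ := hx
  refine ⟨n, fun i => c * f i, fun _ => Set.mem_univ _, ?_⟩
  simp only [Finset.mul_sum, Finset.sum_mul, star_mul, mul_assoc]

def SumSqLE (x y : A) : Prop :=
  y - x ∈ starSums (Set.univ : Set A)

lemma SumSqLE.trans {x y z : A} (hxy : SumSqLE x y) (hyz : SumSqLE y z) : SumSqLE x z := by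
  have := add_mem_starSums hyz hxy
  rwa [sub_add_sub_cancel] at this

lemma SumSqLE.add {x y x' y' : A} (h : SumSqLE x y) (h' : SumSqLE x' y') :
    SumSqLE (x + x') (y + y') := by
  unfold SumSqLE
  rw [add_sub_add_comm]
  exact add_mem_starSums h h'

lemma SumSqLE.nsmul {x y : A} (h : SumSqLE x y) {k : ℕ} (hk : k ≠ 0) :
    SumSqLE (k • x) (k • y) := by
  have := nsmul_mem_starSums h hk
  rwa [smul_sub] at this

end StarSums

section Ceil

variable {A : Type*} [NonUnitalRing A] [StarRing A]

lemma natCast_div_lt_inv_natCast_iff {m n N : ℕ} (hn : 0 < n) :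
    (m : ℝ≥0∞) / n < (N : ℝ≥0∞)⁻¹ ↔ N * m < n := by
  rcases Nat.eq_zero_or_pos N with rfl | hN
  · simpa [hn] using ENNReal.div_lt_top (ENNReal.natCast_ne_top m) (Nat.cast_ne_zero.mpr hn.ne')
  rw [ENNReal.div_lt_iff (by simp [hn.ne']) (by simp), mul_comm, ← div_eq_mul_inv,
    ENNReal.lt_div_iff_mul_lt (by simp [hN.ne']) (by simp), mul_comm]
  norm_cast

/-- `N * m < n` is `m / n < 1 / N` with the division cleared. -/
lemma ceil'_eq_zero_iff {a : A} :
    ceil' a = 0 ↔ ∀ (b : A) (N : ℕ), ∃ m n : ℕ, 0 < m ∧ N * m < n ∧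
      SumSqLE (n • (b * a * star b)) (m • (b * star b)) := by
  refine ENNReal.iSup_eq_zero.trans (forall_congr' fun b => ⟨fun h N => ?_, fun h => ?_⟩)
  · obtain ⟨_, ⟨m, n, hm, hn, rfl, hmn⟩, hlt⟩ :=
      sInf_lt_iff.mp (h ▸ ENNReal.inv_pos.mpr (ENNReal.natCast_ne_top N))
    exact ⟨m, n, hm, (natCast_div_lt_inv_natCast_iff hn).mp hlt, hmn⟩
  · refine nonpos_iff_eq_zero.mp (le_of_forall_gt fun ε hε => ?_)
    obtain ⟨N, hN⟩ := ENNReal.exists_inv_nat_lt hε.ne'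
    obtain ⟨m, n, hm, hmn, hle⟩ := h N
    have hn : 0 < n := by omega
    exact sInf_lt_iff.mpr ⟨_, ⟨m, n, hm, hn, rfl, hle⟩,
      ((natCast_div_lt_inv_natCast_iff hn).mpr hmn).trans hN⟩

lemma exists_sumSqLE_of_ceil'_ne_top {a : A} (h : ceil' a ≠ ⊤) (b : A) :
    ∃ m n : ℕ, 0 < m ∧ 0 < n ∧ SumSqLE (n • (b * a * star b)) (m • (b * star b)) := by
  by_contra! hno
  refine h (eq_top_iff.mpr (le_trans ?_ (le_iSup _ b)))
  refine (sInf_eq_top.mpr ?_).ge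
  rintro _ ⟨m, n, hm, hn, -, hmn⟩
  exact absurd hmn (hno m n hm hn)

lemma ceil'_eq_zero_of_neg_mem_starSums {x : A} (hx : -x ∈ starSums (Set.univ : Set A)) :
    ceil' x = 0 := by
  refine ceil'_eq_zero_iff.mpr fun b N => ⟨1, N + 1, one_pos, by omega, ?_⟩
  unfold SumSqLE
  rw [one_smul, sub_eq_add_neg, ← smul_neg, ← neg_mul, ← mul_neg]
  exact add_mem_starSums (mul_star_mem_starSums b)
    (nsmul_mem_starSums (conj_mem_starSums hx b) N.succ_ne_zero)

lemma ceil'_zero : ceil' (0 : A) = 0 :=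
  ceil'_eq_zero_of_neg_mem_starSums (by simpa using mul_star_mem_starSums (0 : A))

lemma ceil'_neg_mul_star (c : A) : ceil' (-(c * star c)) = 0 :=
  ceil'_eq_zero_of_neg_mem_starSums (by rw [neg_neg]; exact mul_star_mem_starSums c)

lemma ceil'_add_eq_zero {x y : A} (hx : ceil' x = 0) (hy : ceil' y = 0) :
    ceil' (x + y) = 0 := by
  rw [ceil'_eq_zero_iff] at hx hy ⊢
  intro b N
  obtain ⟨m₁, n₁, hm₁, hN₁, h₁⟩ := hx b (2 * N)
  obtain ⟨m₂, n₂, hm₂, hN₂, h₂⟩ := hy b (2 * N)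
  have hn₁ : n₁ ≠ 0 := by omega
  have hn₂ : n₂ ≠ 0 := by omega
  refine ⟨n₂ * m₁ + n₁ * m₂, n₁ * n₂, by positivity, by nlinarith, ?_⟩
  rw [mul_add, add_mul]
  convert (h₁.nsmul hn₂).add (h₂.nsmul hn₁) using 1 <;> module

lemma ceil'_conj_eq_zero {x c : A} (hx : ceil' x = 0) (hfin : ceil' (c * star c) ≠ ⊤) :
    ceil' (c * x * star c) = 0 := by
  rw [ceil'_eq_zero_iff] at hx ⊢
  intro b N
  obtain ⟨m₁, n₁, hm₁, hn₁, h₁⟩ := exists_sumSqLE_of_ceil'_ne_top hfin b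
  obtain ⟨m₂, n₂, hm₂, hN₂, h₂⟩ := hx (b * c) (N * m₁)
  refine ⟨m₂ * m₁, n₁ * n₂, by positivity, by nlinarith, ?_⟩
  have e₁ : b * (c * star c) * star b = b * c * star (b * c) := by
    rw [star_mul]; noncomm_ring
  have e₂ : b * (c * x * star c) * star b = b * c * x * star (b * c) := by
    rw [star_mul]; noncomm_ring
  rw [e₁] at h₁
  -- `n₁n₂·(bc)x(bc)* ≤ n₁m₂·(bc)(bc)* ≤ m₂m₁·bb*`
  rw [e₂, mul_smul, mul_smul]
  refine (h₂.nsmul hn₁.ne').trans ?_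
  rw [smul_comm n₁ m₂]
  exact h₁.nsmul hm₂.ne'

end Ceil

theorem stmt12_general {A : Type*} [NonUnitalRing A] [StarRing A]
    (hArch : ∀ a : A, ceil' (-a) = 0 → ceil' a ≠ ⊤)
    (hInf : ∀ a : A, ceil' a = 0 → ceil' (-a) = 0 → a = 0) :
    (∀ a : A, cle a a) ∧
    (∀ a b : A, cle a b → cle b a → a = b) ∧
    (∀ a b c : A, cle a b → cle b c → cle a c) ∧
    (∀ a b c : A, cle a b → cle (a + c) (b + c)) ∧
    (∀ a b c : A, cle a b → cle (c * a * star c) (c * b * star c)) := by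
  refine ⟨fun a => ?_, fun a b hab hba => ?_, fun a b c hab hbc => ?_,
    fun a b c hab => ?_, fun a b c hab => ?_⟩
  · rw [cle, sub_self]
    exact ceil'_zero
  · exact sub_eq_zero.mp (hInf _ hab (by rwa [neg_sub]))
  · rw [cle, ← sub_add_sub_cancel a b c]
    exact ceil'_add_eq_zero hab hbc
  · rwa [cle, add_sub_add_right_eq_sub]
  · rw [cle, ← sub_mul, ← mul_sub]
    exact ceil'_conj_eq_zero hab (hArch _ (ceil'_neg_mul_star c))

theorem stmt12 {A : Type*} [NonUnitalRing A] [StarRing A]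
    (hArch : ∀ a : A, ceil' (-a) = 0 → ceil' a ≠ ⊤)
    (hInf : ∀ a : A, ceil' a = 0 → ceil' (-a) = 0 → a = 0)
    (hProper : ∀ a : A, a * star a = 0 → a = 0) :
    (∀ a : A, cle a a) ∧
    (∀ a b : A, cle a b → cle b a → a = b) ∧
    (∀ a b c : A, cle a b → cle b c → cle a c) ∧
    (∀ a b c : A, cle a b → cle (a + c) (b + c)) ∧
    (∀ a b c : A, cle a b → cle (c * a * star c) (c * b * star c)) :=
  stmt12_general hArch hInf
end
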